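/- The function Φ is differentiable at every W ∈ (0,∞)^{ℛ̂×𝒵×𝒳}, and its partial derivative with respect to the coordinate W(r̂₀,z₀,x₀) equals p(z₀,x₀) · log₂( a(r̂₀,x₀) / ( p(x₀) · b(r̂₀) ) ). In particular, at a channel W this derivative equals p(z₀,x₀) · log₂( p(r̂₀|x₀) / p(r̂₀) ), where p(r̂|x) and p(r̂) are the induced conditional and marginal distributions of R̂. -/

import Mathlib

open Real Finset

noncomputable section

variable {ℛh 𝒵 𝒳 : Type} [Fintype ℛh] [Fintype 𝒵] [Fintype 𝒳]
  [DecidableEq ℛh] [DecidableEq 𝒵] [DecidableEq 𝒳]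

/-- `a(r̂,x) = ∑_z W(r̂,z,x) p(z,x)`. -/
def aFun (p : 𝒵 → 𝒳 → ℝ) (W : ℛh × 𝒵 × 𝒳 → ℝ) (rh : ℛh) (x : 𝒳) : ℝ :=
  ∑ z, W (rh, z, x) * p z x

/-- `b(r̂) = ∑_{z,x} W(r̂,z,x) p(z,x)`. -/
def bFun (p : 𝒵 → 𝒳 → ℝ) (W : ℛh × 𝒵 × 𝒳 → ℝ) (rh : ℛh) : ℝ :=
  ∑ z, ∑ x, W (rh, z, x) * p z x

/-- Marginal `p(x) = ∑_z p(z,x)`. -/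
def pXm (p : 𝒵 → 𝒳 → ℝ) (x : 𝒳) : ℝ := ∑ z, p z x

/-- `Φ(W) = ∑_{r̂,x} a(r̂,x) log₂( a(r̂,x) / (p(x) b(r̂)) )`; at a channel `W` this equals
the mutual information `I(R̂;X)` of the joint distribution induced by `W` and `p`. -/
def Phi (p : 𝒵 → 𝒳 → ℝ) (W : ℛh × 𝒵 × 𝒳 → ℝ) : ℝ :=
  ∑ rh, ∑ x, aFun p W rh x * logb 2 (aFun p W rh x / (pXm p x * bFun p W rh))

/-!
On the open orthant, `log (a / (p(x) b)) = log a - log p(x) - log b`, and `∑ₓ a(r̂,x) = b(r̂)`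
turns `∑ₓ a log b` into `b log b`. So `Φ · log 2` is
`∑_{r̂,x} a log a - ∑_{r̂,x} a log p(x) - ∑_{r̂} b log b`, where `a` and `b` are linear in `W`.
Differentiating `t log t` gives `log t + 1`; by `∑ₓ a = b` once more, the `+ 1` terms cancel,
leaving the linear form `V ↦ ∑_{r̂,x} a_V(r̂,x) log₂ (a(r̂,x) / (p(x) b(r̂)))`, whose value on a
basis vector is the stated partial derivative.
-/

open scoped Topology

section Derivative

-- Fresh type variables, so that the lemmas do not carry the unused instances of the
-- ambient `variable` line.
variable {ℛh 𝒵 𝒳 : Type} [Fintype 𝒵] {p : 𝒵 → 𝒳 → ℝ}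

variable (p) in
def aCLM (rh : ℛh) (x : 𝒳) : (ℛh × 𝒵 × 𝒳 → ℝ) →L[ℝ] ℝ :=
  ∑ z, p z x • ContinuousLinearMap.proj (R := ℝ) (φ := fun _ : ℛh × 𝒵 × 𝒳 => ℝ) (rh, z, x)

@[simp]
lemma aCLM_apply (rh : ℛh) (x : 𝒳) (W : ℛh × 𝒵 × 𝒳 → ℝ) :
    aCLM p rh x W = aFun p W rh x := by
  simp [aCLM, aFun, mul_comm]

lemma aFun_single [DecidableEq ℛh] [DecidableEq 𝒵] [DecidableEq 𝒳]
    (rh₀ : ℛh) (z₀ : 𝒵) (x₀ : 𝒳) (rh : ℛh) (x : 𝒳) :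
    aFun p (Pi.single (rh₀, z₀, x₀) 1) rh x = if rh = rh₀ ∧ x = x₀ then p z₀ x₀ else 0 := by
  by_cases h : rh = rh₀ ∧ x = x₀
  · obtain ⟨rfl, rfl⟩ := h
    simp [aFun, Pi.single_apply]
  · simp only [aFun, Pi.single_apply, Prod.mk.injEq, if_neg h]
    exact Finset.sum_eq_zero fun z _ => by grind

lemma pXm_pos [Nonempty 𝒵] (hp_pos : ∀ z x, 0 < p z x) (x : 𝒳) : 0 < pXm p x :=
  Finset.sum_pos (fun z _ => hp_pos z x) Finset.univ_nonempty

lemma aFun_pos [Nonempty 𝒵] (hp_pos : ∀ z x, 0 < p z x) {W : ℛh × 𝒵 × 𝒳 → ℝ}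
    (hW : ∀ i, 0 < W i) (rh : ℛh) (x : 𝒳) : 0 < aFun p W rh x :=
  Finset.sum_pos (fun z _ => mul_pos (hW _) (hp_pos z x)) Finset.univ_nonempty

variable [Fintype 𝒳]

variable (p) in
def bCLM (rh : ℛh) : (ℛh × 𝒵 × 𝒳 → ℝ) →L[ℝ] ℝ :=
  ∑ x, aCLM p rh x

lemma sum_aFun (W : ℛh × 𝒵 × 𝒳 → ℝ) (rh : ℛh) :
    ∑ x, aFun p W rh x = bFun p W rh :=
  Finset.sum_comm

@[simp]
lemma bCLM_apply (rh : ℛh) (W : ℛh × 𝒵 × 𝒳 → ℝ) :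
    bCLM p rh W = bFun p W rh := by
  simp [bCLM, sum_aFun]

variable [Nonempty 𝒵] [Nonempty 𝒳] (hp_pos : ∀ z x, 0 < p z x)
include hp_pos

lemma bFun_pos {W : ℛh × 𝒵 × 𝒳 → ℝ} (hW : ∀ i, 0 < W i) (rh : ℛh) : 0 < bFun p W rh :=
  sum_aFun W rh ▸ Finset.sum_pos (fun x _ => aFun_pos hp_pos hW rh x) Finset.univ_nonempty

lemma log_aFun_div {W : ℛh × 𝒵 × 𝒳 → ℝ} (hW : ∀ i, 0 < W i) (rh : ℛh) (x : 𝒳) :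
    log (aFun p W rh x / (pXm p x * bFun p W rh)) =
      log (aFun p W rh x) - log (pXm p x) - log (bFun p W rh) := by
  have hb := bFun_pos hp_pos hW rh
  have hx := pXm_pos hp_pos x
  rw [log_div (aFun_pos hp_pos hW rh x).ne' (mul_pos hx hb).ne', log_mul hx.ne' hb.ne']
  ring

variable [Fintype ℛh]

lemma Phi_eq_sum_mul_log {W : ℛh × 𝒵 × 𝒳 → ℝ} (hW : ∀ i, 0 < W i) :
    Phi p W = (log 2)⁻¹ * (∑ rh, ∑ x, (aFun p W rh x * log (aFun p W rh x)
      - log (pXm p x) * aFun p W rh x) - ∑ rh, bFun p W rh * log (bFun p W rh)) := by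
  have hb (rh : ℛh) : bFun p W rh * log (bFun p W rh) =
      ∑ x, aFun p W rh x * log (bFun p W rh) := by
    rw [← Finset.sum_mul, sum_aFun]
  simp only [Phi, logb, log_aFun_div hp_pos hW, hb, ← Finset.sum_sub_distrib, Finset.mul_sum]
  refine Finset.sum_congr rfl fun rh _ => Finset.sum_congr rfl fun x _ => ?_
  ring

lemma hasFDerivAt_Phi {W : ℛh × 𝒵 × 𝒳 → ℝ} (hW : ∀ i, 0 < W i) :
    HasFDerivAt (Phi p)
      (∑ rh, ∑ x, logb 2 (aFun p W rh x / (pXm p x * bFun p W rh)) • aCLM p rh x) W := by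
  have hnear : ∀ᶠ W' in 𝓝 W, ∀ i, 0 < W' i :=
    Filter.eventually_all.2 fun i => (continuous_apply i).tendsto W |>.eventually_const_lt (hW i)
  have hPhi : Phi p =ᶠ[𝓝 W] fun W' => (log 2)⁻¹ * (∑ rh, ∑ x, (aCLM p rh x W' *
      log (aCLM p rh x W') - log (pXm p x) * aCLM p rh x W') -
      ∑ rh, bCLM p rh W' * log (bCLM p rh W')) := by
    filter_upwards [hnear] with W' hW'
    simpa using Phi_eq_sum_mul_log hp_pos hW'
  have hmul_log {L : (ℛh × 𝒵 × 𝒳 → ℝ) →L[ℝ] ℝ} (hL : 0 < L W) :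
      HasFDerivAt (fun W' => L W' * log (L W')) ((log (L W) + 1) • L) W :=
    (hasDerivAt_mul_log hL.ne').comp_hasFDerivAt W L.hasFDerivAt
  refine (HasFDerivAt.const_mul (.sub (.fun_sum fun rh _ => .fun_sum fun x _ =>
    (hmul_log ?_).sub ((aCLM p rh x).hasFDerivAt.const_mul _))
    (.fun_sum fun rh _ => hmul_log ?_)) _).congr_of_eventuallyEq hPhi |>.congr_fderiv ?_
  · simpa using aFun_pos hp_pos hW rh x
  · simpa using bFun_pos hp_pos hW rh
  · ext V
    simp only [sub_apply, smul_apply, _root_.sum_apply, aCLM_apply, bCLM_apply, smul_eq_mul,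
      ← sum_aFun V, Finset.mul_sum, ← Finset.sum_sub_distrib, logb, log_aFun_div hp_pos hW]
    refine Finset.sum_congr rfl fun rh _ => Finset.sum_congr rfl fun x _ => ?_
    ring

end Derivative

theorem statement11_general
    (p : 𝒵 → 𝒳 → ℝ)
    (hp_pos : ∀ z x, 0 < p z x)
    (W : ℛh × 𝒵 × 𝒳 → ℝ) (hW : ∀ i, 0 < W i)
    (rh₀ : ℛh) (z₀ : 𝒵) (x₀ : 𝒳) :
    DifferentiableAt ℝ (Phi p) W ∧
    fderiv ℝ (Phi p) W (Pi.single (rh₀, z₀, x₀) 1) =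
      p z₀ x₀ * logb 2 (aFun p W rh₀ x₀ / (pXm p x₀ * bFun p W rh₀)) ∧
    ((∀ z x, ∑ rh, W (rh, z, x) = 1) →
      fderiv ℝ (Phi p) W (Pi.single (rh₀, z₀, x₀) 1) =
        p z₀ x₀ * logb 2 ((aFun p W rh₀ x₀ / pXm p x₀) / bFun p W rh₀)) := by
  have : Nonempty 𝒵 := ⟨z₀⟩
  have : Nonempty 𝒳 := ⟨x₀⟩
  have hΦ := hasFDerivAt_Phi hp_pos hW
  have hpartial : fderiv ℝ (Phi p) W (Pi.single (rh₀, z₀, x₀) 1) =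
      p z₀ x₀ * logb 2 (aFun p W rh₀ x₀ / (pXm p x₀ * bFun p W rh₀)) := by
    simp [hΦ.fderiv, aFun_single, ite_and, mul_comm]
  exact ⟨hΦ.differentiableAt, hpartial, fun _ => by rw [hpartial, div_div]⟩

/-- `Φ` is differentiable at every `W ∈ (0,∞)^{ℛ̂×𝒵×𝒳}`, with partial
derivative w.r.t. the coordinate `W(r̂₀,z₀,x₀)` equal to
`p(z₀,x₀) log₂( a(r̂₀,x₀) / (p(x₀) b(r̂₀)) )`.  In particular, at a channel `W` this
derivative equals `p(z₀,x₀) log₂( p(r̂₀|x₀) / p(r̂₀) )`, where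
`p(r̂|x) = a(r̂,x)/p(x)` and `p(r̂) = b(r̂)` are the induced conditional and marginal
distributions of `R̂`. -/
theorem statement11
    (p : 𝒵 → 𝒳 → ℝ)
    (hp_pos : ∀ z x, 0 < p z x) (hp_sum : ∑ z, ∑ x, p z x = 1)
    (W : ℛh × 𝒵 × 𝒳 → ℝ) (hW : ∀ i, 0 < W i)
    (rh₀ : ℛh) (z₀ : 𝒵) (x₀ : 𝒳) :
    DifferentiableAt ℝ (Phi p) W ∧
    fderiv ℝ (Phi p) W (Pi.single (rh₀, z₀, x₀) 1) =
      p z₀ x₀ * logb 2 (aFun p W rh₀ x₀ / (pXm p x₀ * bFun p W rh₀)) ∧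
    ((∀ z x, ∑ rh, W (rh, z, x) = 1) →
      fderiv ℝ (Phi p) W (Pi.single (rh₀, z₀, x₀) 1) =
        p z₀ x₀ * logb 2 ((aFun p W rh₀ x₀ / pXm p x₀) / bFun p W rh₀)) :=
  statement11_general p hp_pos W hW rh₀ z₀ x₀

end
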